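/- The map x ↦ 1 − (2/Γ(Q))(c x)^(Q/2) K_Q(2√(c x)) for x > 0, c > 0, Q a positive integer, is a strictly increasing function with limit 0 as x → 0⁺ and limit 1 as x → ∞; i.e., it is a valid continuous CDF on (0,∞). -/

import Mathlib

open MeasureTheory Real Set Filter Topology

/-- The modified Bessel function of the second kind `K_ν(x)`. -/
noncomputable def besselK (ν x : ℝ) : ℝ :=
  ∫ t in Set.Ioi (0 : ℝ), Real.exp (-x * Real.cosh t) * Real.cosh (ν * t)

/-!
Substituting `t = √y e^u` in Krätzel's integral `Z(y) = ∫₀^∞ t^(ν-1) e^(-t-y/t) dt` and folding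
the real line onto `(0, ∞)` gives `Z(y) = 2 y^(ν/2) K_ν(2√y)`, so the function in question is
`1 - Z(c x) / Γ(ν)`. The integrand of `Z` decreases strictly in `y` and is dominated by the Gamma
integrand `t^(ν-1) e^(-t)`; hence `Z` is strictly decreasing and continuous on `[0, ∞)`,
`Z(0) = Γ(ν)`, and `Z(y) → 0` as `y → ∞` by dominated convergence.
-/

theorem setIntegral_lt_setIntegral_of_forall_lt {X : Type*} [MeasurableSpace X] {μ : Measure X}
    {s : Set X} {f g : X → ℝ} (hs : MeasurableSet s) (hμ : μ s ≠ 0) (hf : IntegrableOn f s μ)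
    (hg : IntegrableOn g s μ) (hlt : ∀ x ∈ s, f x < g x) :
    ∫ x in s, f x ∂μ < ∫ x in s, g x ∂μ := by
  rw [← sub_pos, ← integral_sub hg hf]
  refine (setIntegral_pos_iff_support_of_nonneg_ae ?_ (hg.sub hf)).2 ?_
  · filter_upwards [ae_restrict_mem hs] with x hx using sub_nonneg.2 (hlt x hx).le
  · have hsupp : s ⊆ Function.support (g - f) := fun x hx => sub_ne_zero.2 (hlt x hx).ne'
    rwa [inter_eq_right.2 hsupp, pos_iff_ne_zero]

theorem integral_Ioi_add_comp_neg {E : Type*} [NormedAddCommGroup E] [NormedSpace ℝ E]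
    {f : ℝ → E} (hf : Integrable f) : ∫ x in Ioi 0, (f x + f (-x)) = ∫ x, f x := by
  rw [integral_add hf.integrableOn hf.comp_neg.integrableOn, integral_comp_neg_Ioi, neg_zero,
    add_comm, intervalIntegral.integral_Iic_add_Ioi hf.integrableOn hf.integrableOn]

section MulExp

variable {E : Type*} [NormedAddCommGroup E] [NormedSpace ℝ E] {a : ℝ}

theorem image_univ_const_mul_exp (ha : 0 < a) : (fun u => a * exp u) '' univ = Ioi 0 := by
  rw [image_univ]
  ext t
  refine ⟨fun ⟨u, hu⟩ => hu ▸ mul_pos ha (exp_pos u), fun ht => ⟨log (t / a), ?_⟩⟩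
  dsimp only
  rw [exp_log (div_pos ht ha), mul_div_cancel₀ _ ha.ne']

theorem integral_comp_const_mul_exp (ha : 0 < a) (g : ℝ → E) :
    ∫ u, (a * exp u) • g (a * exp u) = ∫ t in Ioi 0, g t := by
  rw [← image_univ_const_mul_exp ha, integral_image_eq_integral_abs_deriv_smul MeasurableSet.univ
    (fun u _ => ((hasDerivAt_exp u).const_mul a).hasDerivWithinAt)
    ((mul_right_injective₀ ha.ne').comp exp_injective).injOn, Measure.restrict_univ]
  simp only [abs_of_pos (mul_pos ha (exp_pos _))]

theorem integrable_comp_const_mul_exp_iff (ha : 0 < a) (g : ℝ → E) :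
    Integrable (fun u => (a * exp u) • g (a * exp u)) ↔ IntegrableOn g (Ioi 0) := by
  rw [← image_univ_const_mul_exp ha, integrableOn_image_iff_integrableOn_abs_deriv_smul
    MeasurableSet.univ (fun u _ => ((hasDerivAt_exp u).const_mul a).hasDerivWithinAt)
    ((mul_right_injective₀ ha.ne').comp exp_injective).injOn, integrableOn_univ]
  simp only [abs_of_pos (mul_pos ha (exp_pos _))]

end MulExp

section Kratzel

/-- Krätzel's function `Z₁^ν`. -/
noncomputable def kratzel (ν y : ℝ) : ℝ :=
  ∫ t in Ioi 0, exp (-t - y / t) * t ^ (ν - 1)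

variable {ν y : ℝ}

theorem ae_norm_kratzel_integrand_le (hy : 0 ≤ y) :
    ∀ᵐ t ∂volume.restrict (Ioi 0),
      ‖exp (-t - y / t) * t ^ (ν - 1)‖ ≤ exp (-t) * t ^ (ν - 1) := by
  filter_upwards [ae_restrict_mem measurableSet_Ioi] with t (ht : 0 < t)
  rw [norm_of_nonneg (by positivity)]
  gcongr
  linarith [div_nonneg hy ht.le]

theorem aestronglyMeasurable_kratzel_integrand (ν y : ℝ) :
    AEStronglyMeasurable (fun t => exp (-t - y / t) * t ^ (ν - 1)) (volume.restrict (Ioi 0)) :=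
  (by fun_prop : Measurable fun t : ℝ => exp (-t - y / t) * t ^ (ν - 1)).aestronglyMeasurable

theorem integrableOn_kratzel_integrand (hν : 0 < ν) (hy : 0 ≤ y) :
    IntegrableOn (fun t => exp (-t - y / t) * t ^ (ν - 1)) (Ioi 0) :=
  (GammaIntegral_convergent hν).mono' (aestronglyMeasurable_kratzel_integrand ν y)
    (ae_norm_kratzel_integrand_le hy)

theorem kratzel_zero (hν : 0 < ν) : kratzel ν 0 = Gamma ν := by
  simp [kratzel, Gamma_eq_integral hν]

theorem kratzel_strictAntiOn (hν : 0 < ν) : StrictAntiOn (kratzel ν) (Ici 0) := by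
  intro y₁ hy₁ y₂ hy₂ hy
  refine setIntegral_lt_setIntegral_of_forall_lt measurableSet_Ioi (by simp)
    (integrableOn_kratzel_integrand hν hy₂) (integrableOn_kratzel_integrand hν hy₁)
    fun t (ht : 0 < t) => by gcongr

theorem continuousOn_kratzel (hν : 0 < ν) : ContinuousOn (kratzel ν) (Ici 0) :=
  continuousOn_of_dominated (fun y _ => aestronglyMeasurable_kratzel_integrand ν y)
    (fun _ hy => ae_norm_kratzel_integrand_le hy) (GammaIntegral_convergent hν)
    (ae_of_all _ fun _ => by fun_prop)

theorem tendsto_kratzel_atTop (hν : 0 < ν) : Tendsto (kratzel ν) atTop (𝓝 0) := by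
  have hpointwise : ∀ᵐ t ∂volume.restrict (Ioi 0),
      Tendsto (fun y => exp (-t - y / t) * t ^ (ν - 1)) atTop (𝓝 0) := by
    filter_upwards [ae_restrict_mem measurableSet_Ioi] with t (ht : 0 < t)
    have : Tendsto (fun y => -t - y / t) atTop atBot :=
      tendsto_atBot_add_const_left _ _
        (tendsto_neg_atTop_atBot.comp (tendsto_id.atTop_div_const ht))
    simpa using (tendsto_exp_atBot.comp this).mul_const (t ^ (ν - 1))
  have hlim := tendsto_integral_filter_of_dominated_convergence _
    (.of_forall (aestronglyMeasurable_kratzel_integrand ν))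
    ((eventually_ge_atTop 0).mono fun _ hy => ae_norm_kratzel_integrand_le hy)
    (GammaIntegral_convergent hν) hpointwise
  rwa [integral_zero] at hlim

theorem const_mul_exp_smul_kratzel_integrand {a : ℝ} (ha : 0 < a) (u : ℝ) :
    (a * exp u) • (exp (-(a * exp u) - a ^ 2 / (a * exp u)) * (a * exp u) ^ (ν - 1)) =
      a ^ ν * (exp (-(2 * a) * cosh u) * exp (ν * u)) := by
  have hpow : (a * exp u) ^ (ν - 1) = a ^ ν * exp (ν * u) / (a * exp u) := by
    rw [rpow_sub_one (by positivity), mul_rpow ha.le (exp_pos u).le, ← exp_mul, mul_comm u]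
  have harg : -(a * exp u) - a ^ 2 / (a * exp u) = -(2 * a) * cosh u := by
    rw [cosh_eq, exp_neg]
    field_simp
    ring
  rw [smul_eq_mul, hpow, harg]
  field_simp

theorem kratzel_sq (hν : 0 < ν) {a : ℝ} (ha : 0 < a) :
    kratzel ν (a ^ 2) = 2 * a ^ ν * besselK ν (2 * a) := by
  set h : ℝ → ℝ := fun u => exp (-(2 * a) * cosh u) * exp (ν * u)
  have hint : Integrable h := by
    have := (integrable_comp_const_mul_exp_iff ha _).2
      (integrableOn_kratzel_integrand hν (sq_nonneg a))
    simp only [const_mul_exp_smul_kratzel_integrand ha] at this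
    exact (integrable_const_mul_iff (by positivity : a ^ ν ≠ 0).isUnit _).1 this
  have heven : ∀ u, h u + h (-u) = 2 * (exp (-(2 * a) * cosh u) * cosh (ν * u)) := fun u => by
    simp only [h, cosh_neg, cosh_eq (ν * u), mul_neg]
    ring
  rw [kratzel, ← integral_comp_const_mul_exp ha]
  simp only [const_mul_exp_smul_kratzel_integrand ha]
  rw [integral_const_mul, ← integral_Ioi_add_comp_neg hint]
  simp only [heven, integral_const_mul, besselK]
  ring

theorem kratzel_eq_besselK (hν : 0 < ν) (hy : 0 < y) :
    kratzel ν y = 2 * y ^ (ν / 2) * besselK ν (2 * √y) := by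
  have hpow : y ^ (ν / 2) = √y ^ ν := by
    rw [sqrt_eq_rpow, ← rpow_mul hy.le, one_div_mul_eq_div]
  rw [hpow, ← kratzel_sq hν (sqrt_pos.2 hy), sq_sqrt hy.le]

end Kratzel

/-- The map `x ↦ 1 − (2/Γ(Q))(cx)^(Q/2) K_Q(2√(cx))` is a genuine continuous
CDF on `(0,∞)`: strictly increasing, tending to `0` as `x → 0⁺` and to `1`
as `x → ∞`. -/
theorem cascaded_cdf_valid (Q : ℕ) (hQ : 1 ≤ Q) (c : ℝ) (hc : 0 < c)
    (F : ℝ → ℝ)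
    (hF : ∀ x, F x = 1 - (2 / Real.Gamma Q) * (c * x) ^ ((Q : ℝ) / 2) *
      besselK (Q : ℝ) (2 * Real.sqrt (c * x))) :
    StrictMonoOn F (Set.Ioi 0) ∧
    ContinuousOn F (Set.Ioi 0) ∧
    Tendsto F (nhdsWithin 0 (Set.Ioi 0)) (nhds 0) ∧
    Tendsto F atTop (nhds 1) := by
  have hQ : (0 : ℝ) < Q := by exact_mod_cast hQ
  have hΓ : 0 < Gamma Q := Gamma_pos_of_pos hQ
  set G : ℝ → ℝ := fun x => 1 - kratzel Q (c * x) / Gamma Q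
  have hFG : EqOn F G (Ioi 0) := fun x hx => by
    simp only [hF, G, kratzel_eq_besselK hQ (mul_pos hc hx)]
    field_simp
  have hG : ContinuousOn G (Ici 0) := continuousOn_const.sub <| ContinuousOn.div_const
    ((continuousOn_kratzel hQ).comp (by fun_prop) fun x hx => mul_nonneg hc.le hx) _
  refine ⟨fun x hx y hy hxy => ?_, (hG.mono Ioi_subset_Ici_self).congr hFG, ?_, ?_⟩
  · rw [hFG hx, hFG hy]
    have := kratzel_strictAntiOn hQ (mul_pos hc hx).le (mul_pos hc hy).le
      (mul_lt_mul_of_pos_left hxy hc)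
    dsimp only [G]
    gcongr
  · have hG0 : G 0 = 0 := by simp [G, kratzel_zero hQ, hΓ.ne']
    refine Tendsto.congr' (hFG.eventuallyEq_nhdsWithin).symm ?_
    simpa only [hG0] using ((hG 0 self_mem_Ici).mono Ioi_subset_Ici_self).tendsto
  · have := ((tendsto_kratzel_atTop hQ).comp (tendsto_id.const_mul_atTop hc)).div_const (Gamma Q)
    refine Tendsto.congr' ?_ (by simpa using tendsto_const_nhds.sub this : Tendsto G _ _)
    exact (eventually_gt_atTop 0).mono fun x hx => (hFG hx).symm
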